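/- Under the same hypotheses (P = (t₁|t₂|n₀) invertible, n₀ unit orthogonal to t₁, t₂; U := (m₁|m₂|n₀)·P⁻¹ ∈ Sym⁺(3); I_m♭ = (m₁|m₂|0)ᵀ(m₁|m₂|0); II_m♭ = -(m₁|m₂|0)ᵀ(ν₁|ν₂|0); II_{y₀}♭ = -(t₁|t₂|0)ᵀ(ν₁|ν₂|0)), Acharya's bending tensor R̃ := -[P⁻ᵀ·II_m♭·P⁻¹ - √(P⁻ᵀ·I_m♭·P⁻¹)·P⁻ᵀ·II_{y₀}♭·P⁻¹] equals the zero matrix, where √ denotes the unique positive semidefinite square root. -/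

import Mathlib

/-!
Put `Q = n₀ n₀ᵀ` and `P = (t₁|t₂|n₀)`. Since `n₀` is a unit vector orthogonal to `t₁, t₂`, we have
`n₀ᵀ P = e₃ᵀ` and `P e₃ = n₀`; hence `U n₀ = n₀`, `(m₁|m₂|0) P⁻¹ = U - Q` and
`(t₁|t₂|0) P⁻¹ = 1 - Q`. The matrix `S = U - Q = (1 - Q) U (1 - Q)` is symmetric positive
semidefinite with `S² = P⁻ᵀ I_m♭ P⁻¹`, so it is the square root. Finally `S Q = 0` gives
`S P⁻ᵀ (t₁|t₂|0)ᵀ = S (1 - Q) = S = P⁻ᵀ (m₁|m₂|0)ᵀ`, and the two terms of `R̃` cancel.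
-/

open Matrix

/-- The 3×3 matrix with columns `a`, `b`, `c`. -/
def col3 (a b c : Fin 3 → ℝ) : Matrix (Fin 3) (Fin 3) ℝ :=
  Matrix.of fun i j => ![a, b, c] j i

section
open scoped ComplexOrder

/-- The positive semidefinite square root of a positive semidefinite matrix, as
`Matrix.PosSemidef.sqrt` was defined in Mathlib of December 2024 (since removed). -/
noncomputable def posSemidefSqrtOld {n 𝕜 : Type*} [Fintype n] [DecidableEq n] [RCLike 𝕜]
    {A : Matrix n n 𝕜} (hA : A.PosSemidef) : Matrix n n 𝕜 :=
  hA.1.eigenvectorUnitary.1 * diagonal ((↑) ∘ (√·) ∘ hA.1.eigenvalues) *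
    (star hA.1.eigenvectorUnitary : Matrix n n 𝕜)

end

-- The eigenvector construction is the continuous functional calculus square root.
open scoped MatrixOrder ComplexOrder in
theorem posSemidefSqrtOld_eq_of_sq {n 𝕜 : Type*} [Fintype n] [DecidableEq n] [RCLike 𝕜]
    {A S : Matrix n n 𝕜} (hA : A.PosSemidef)
    (hS : S.PosSemidef) (h : S ^ 2 = A) : posSemidefSqrtOld hA = S := by
  have hsqrt : CFC.sqrt A = S := CFC.sqrt_unique (by rw [← sq, h]) hS.nonneg
  rw [← hsqrt, CFC.sqrt_eq_cfc, cfc_nnreal_eq_real _ A, hA.1.cfc_eq, IsHermitian.cfc,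
    Unitary.conjStarAlgAut_apply, posSemidefSqrtOld]
  congr 3
  funext i
  simp [max_eq_left (hA.eigenvalues_nonneg i)]

section Rank1Projection

variable {n R : Type*} [Fintype n] [CommRing R] {v : n → R} {U : Matrix n n R}

theorem vecMulVec_self_mul_self (hv : v ⬝ᵥ v = 1) :
    vecMulVec v v * vecMulVec v v = vecMulVec v v := by
  rw [vecMulVec_mul_vecMulVec, hv, one_smul]

theorem sub_vecMulVec_self_mul_self (hv : v ⬝ᵥ v = 1) (hUv : U *ᵥ v = v) :
    (U - vecMulVec v v) * vecMulVec v v = 0 := by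
  rw [Matrix.sub_mul, mul_vecMulVec, hUv, vecMulVec_self_mul_self hv, sub_self]

variable [DecidableEq n]

theorem sub_vecMulVec_self_eq_transpose_mul_mul (hv : v ⬝ᵥ v = 1) (hU : U.IsSymm) (hUv : U *ᵥ v = v) :
    U - vecMulVec v v = (1 - vecMulVec v v)ᵀ * U * (1 - vecMulVec v v) := by
  have hvU : vecMulVec v v * U = vecMulVec v v := by
    rw [vecMulVec_mul, ← mulVec_transpose, hU.eq, hUv]
  rw [transpose_sub, transpose_one, transpose_vecMulVec, Matrix.sub_mul, Matrix.one_mul, hvU,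
    Matrix.mul_sub, Matrix.mul_one, sub_vecMulVec_self_mul_self hv hUv, sub_zero]

end Rank1Projection

theorem Matrix.PosSemidef.sub_vecMulVec_self {n : Type*} [Fintype n] [DecidableEq n]
    {v : n → ℝ} {U : Matrix n n ℝ} (hU : U.PosSemidef) (hv : v ⬝ᵥ v = 1)
    (hUv : U *ᵥ v = v) : (U - vecMulVec v v).PosSemidef := by
  rw [sub_vecMulVec_self_eq_transpose_mul_mul hv (isHermitian_iff_isSymm.mp hU.isHermitian) hUv]
  exact hU.conjTranspose_mul_mul_same _

section Col3

theorem col3_mulVec_single (a b c : Fin 3 → ℝ) : col3 a b c *ᵥ Pi.single 2 1 = c := by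
  ext i
  simp [col3, mulVec, dotProduct, Fin.sum_univ_three]

theorem col3_eq_add_vecMulVec (a b c : Fin 3 → ℝ) :
    col3 a b c = col3 a b 0 + vecMulVec c (Pi.single 2 1) := by
  ext i j
  fin_cases j <;> simp [col3, vecMulVec_apply]

variable {t₁ t₂ n₀ : Fin 3 → ℝ}

theorem vecMul_col3_of_orthonormal (hn : n₀ ⬝ᵥ n₀ = 1) (h1 : n₀ ⬝ᵥ t₁ = 0)
    (h2 : n₀ ⬝ᵥ t₂ = 0) : n₀ ᵥ* col3 t₁ t₂ n₀ = Pi.single 2 1 := by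
  ext j
  fin_cases j <;> simp_all [col3, vecMul, dotProduct, Fin.sum_univ_three, mul_comm]

theorem col3_mul_inv_mulVec (hP : IsUnit (col3 t₁ t₂ n₀).det) (a b : Fin 3 → ℝ) :
    (col3 a b n₀ * (col3 t₁ t₂ n₀)⁻¹) *ᵥ n₀ = n₀ := by
  have h : (col3 t₁ t₂ n₀)⁻¹ *ᵥ n₀ = Pi.single 2 1 := by
    nth_rw 2 [← col3_mulVec_single t₁ t₂ n₀]
    rw [mulVec_mulVec, nonsing_inv_mul _ hP, one_mulVec]
  rw [← mulVec_mulVec, h, col3_mulVec_single]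

theorem col3_zero_mul_inv (hn : n₀ ⬝ᵥ n₀ = 1) (h1 : n₀ ⬝ᵥ t₁ = 0) (h2 : n₀ ⬝ᵥ t₂ = 0)
    (hP : IsUnit (col3 t₁ t₂ n₀).det) (a b : Fin 3 → ℝ) :
    col3 a b 0 * (col3 t₁ t₂ n₀)⁻¹ = col3 a b n₀ * (col3 t₁ t₂ n₀)⁻¹ - vecMulVec n₀ n₀ := by
  have h : vecMulVec n₀ (Pi.single 2 1) * (col3 t₁ t₂ n₀)⁻¹ = vecMulVec n₀ n₀ := by
    rw [vecMulVec_mul, ← vecMul_col3_of_orthonormal hn h1 h2, vecMul_vecMul,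
      mul_nonsing_inv _ hP, vecMul_one]
  rw [col3_eq_add_vecMulVec a b n₀, Matrix.add_mul, h, add_sub_cancel_right]

end Col3

/-- Acharya's bending tensor
`R̃ = -[P⁻ᵀ II_m♭ P⁻¹ - √(P⁻ᵀ I_m♭ P⁻¹) · P⁻ᵀ II_{y₀}♭ P⁻¹]`
vanishes for a pure elastic stretch that leaves the unit normal unaltered. -/
theorem acharya_bending_vanishes (t₁ t₂ n₀ m₁ m₂ ν₁ ν₂ : Fin 3 → ℝ)
    (P U : Matrix (Fin 3) (Fin 3) ℝ)
    (hn : n₀ ⬝ᵥ n₀ = 1) (h1 : n₀ ⬝ᵥ t₁ = 0) (h2 : n₀ ⬝ᵥ t₂ = 0)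
    (hPdef : P = col3 t₁ t₂ n₀) (hP : IsUnit P.det)
    (hU : U = col3 m₁ m₂ n₀ * P⁻¹) (hUpd : U.PosDef) :
    ∀ h : ((P⁻¹)ᵀ * ((col3 m₁ m₂ 0)ᵀ * col3 m₁ m₂ 0) * P⁻¹).PosSemidef,
      -((P⁻¹)ᵀ * (-((col3 m₁ m₂ 0)ᵀ * col3 ν₁ ν₂ 0)) * P⁻¹ -
          posSemidefSqrtOld h * ((P⁻¹)ᵀ * (-((col3 t₁ t₂ 0)ᵀ * col3 ν₁ ν₂ 0)) * P⁻¹)) = 0 := by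
  intro h
  have hUn : U *ᵥ n₀ = n₀ := by
    subst hPdef hU
    exact col3_mul_inv_mulVec hP m₁ m₂
  set S := U - vecMulVec n₀ n₀
  have hM : col3 m₁ m₂ 0 * P⁻¹ = S := by
    subst hPdef
    rw [col3_zero_mul_inv hn h1 h2 hP, ← hU]
  have hT : col3 t₁ t₂ 0 * P⁻¹ = 1 - vecMulVec n₀ n₀ := by
    subst hPdef
    rw [col3_zero_mul_inv hn h1 h2 hP, mul_nonsing_inv _ hP]
  have hSsymm : Sᵀ = S := by
    rw [transpose_sub, (isHermitian_iff_isSymm.mp hUpd.isHermitian).eq, transpose_vecMulVec]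
  have hSsq : S ^ 2 = (P⁻¹)ᵀ * ((col3 m₁ m₂ 0)ᵀ * col3 m₁ m₂ 0) * P⁻¹ := by
    rw [sq]
    nth_rw 1 [← hSsymm]
    rw [← hM]
    simp only [transpose_mul, Matrix.mul_assoc]
  rw [posSemidefSqrtOld_eq_of_sq (S := S) h (hUpd.posSemidef.sub_vecMulVec_self hn hUn) hSsq]
  have hST : S * (P⁻¹)ᵀ * (col3 t₁ t₂ 0)ᵀ = (P⁻¹)ᵀ * (col3 m₁ m₂ 0)ᵀ := by
    rw [Matrix.mul_assoc, ← transpose_mul, hT, ← transpose_mul, hM, transpose_sub, transpose_one,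
      transpose_vecMulVec, Matrix.mul_sub, Matrix.mul_one, sub_vecMulVec_self_mul_self hn hUn,
      sub_zero, hSsymm]
  simp only [Matrix.mul_neg, Matrix.neg_mul, ← Matrix.mul_assoc, hST]
  abel
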